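/- (Rough Stone algebra) For every X ⊆ U, with X* := U \ R⁻(X) and X** := U \ R⁻(X*) (which equals R⁻(X)), the join of RS(X*) and RS(X**) is (U,U): R₋(X*) ∪ R₋(X**) = U and R⁻(X*) ∪ R⁻(X**) = U. -/
import Mathlib


/-- Lower approximation: `R₋(X) = {x ∈ U | [x]_R ⊆ X}`. -/
def lowerApprox {U : Type*} (R : Setoid U) (X : Set U) : Set U :=
  {x | {y | R.r x y} ⊆ X}

/-- Upper approximation: `R⁻(X) = {x ∈ U | [x]_R ∩ X ≠ ∅}`. -/
def upperApprox {U : Type*} (R : Setoid U) (X : Set U) : Set U :=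
  {x | ({y | R.r x y} ∩ X) ≠ ∅}

/-- Rough set `RS(X) = (R₋(X), R⁻(X))`. -/
def RS {U : Type*} (R : Setoid U) (X : Set U) : Set U × Set U :=
  (lowerApprox R X, upperApprox R X)

/-- `T = {RS(X) | X ⊆ U}`. -/
def RoughT {U : Type*} (R : Setoid U) : Set (Set U × Set U) :=
  {p | ∃ X : Set U, p = RS R X}

/-- Componentwise inclusion order on approximation pairs. -/
def rle {U : Type*} (p q : Set U × Set U) : Prop :=
  p.1 ⊆ q.1 ∧ p.2 ⊆ q.2

/-- Componentwise intersection (the meet `∇` on approximation pairs). -/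
def pmeet {U : Type*} (p q : Set U × Set U) : Set U × Set U :=
  (p.1 ∩ q.1, p.2 ∩ q.2)

/-- Componentwise union (the join `Δ` on approximation pairs). -/
def pjoin {U : Type*} (p q : Set U × Set U) : Set U × Set U :=
  (p.1 ∪ q.1, p.2 ∪ q.2)

/-- `RS(W)` is the relative pseudocomplement of `RS(X)` with respect to `RS(Y)`. -/
def IsRelPC {U : Type*} (R : Setoid U) (X Y W : Set U) : Prop :=
  lowerApprox R W ∩ lowerApprox R X ⊆ lowerApprox R Y ∧
  upperApprox R W ∩ upperApprox R X ⊆ upperApprox R Y ∧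
  ∀ K : Set U, lowerApprox R K ∩ lowerApprox R X ⊆ lowerApprox R Y →
    upperApprox R K ∩ upperApprox R X ⊆ upperApprox R Y →
    lowerApprox R K ⊆ lowerApprox R W ∧ upperApprox R K ⊆ upperApprox R W

/-- `RS(V)` is the dual relative pseudocomplement of `RS(X)` with respect to `RS(Y)`. -/
def IsDualRelPC {U : Type*} (R : Setoid U) (X Y V : Set U) : Prop :=
  lowerApprox R X ⊆ lowerApprox R Y ∪ lowerApprox R V ∧
  upperApprox R X ⊆ upperApprox R Y ∪ upperApprox R V ∧
  ∀ K : Set U, lowerApprox R X ⊆ lowerApprox R Y ∪ lowerApprox R K →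
    upperApprox R X ⊆ upperApprox R Y ∪ upperApprox R K →
    lowerApprox R V ⊆ lowerApprox R K ∧ upperApprox R V ⊆ upperApprox R K


lemma upper_saturated {U : Type*} (R : Setoid U) (X : Set U) {x y : U}
    (h : R.r x y) (hx : x ∈ upperApprox R X) : y ∈ upperApprox R X := by
  simp only [upperApprox, Set.mem_setOf_eq, ← Set.nonempty_iff_ne_empty] at *
  obtain ⟨z, hz1, hz2⟩ := hx
  exact ⟨z, R.trans (R.symm h) hz1, hz2⟩

lemma upper_compl_upper {U : Type*} (R : Setoid U) (X : Set U) :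
    upperApprox R (upperApprox R X)ᶜ = (upperApprox R X)ᶜ := by
  ext x
  simp only [upperApprox, Set.mem_setOf_eq, ← Set.nonempty_iff_ne_empty, Set.mem_compl_iff]
  constructor
  · rintro ⟨z, hz1, hz2⟩ hx
    exact hz2 (by simpa [upperApprox, ← Set.nonempty_iff_ne_empty] using
      upper_saturated R X hz1 (by simpa [upperApprox, ← Set.nonempty_iff_ne_empty] using hx))
  · intro hx
    exact ⟨x, R.refl x, hx⟩

lemma upper_upper {U : Type*} (R : Setoid U) (X : Set U) :
    upperApprox R (upperApprox R X) = upperApprox R X := by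
  ext x
  simp only [upperApprox, Set.mem_setOf_eq, ← Set.nonempty_iff_ne_empty]
  constructor
  · rintro ⟨z, hz1, hz2⟩
    simpa [upperApprox, ← Set.nonempty_iff_ne_empty] using
      upper_saturated R X (R.symm hz1) (by simpa [upperApprox, ← Set.nonempty_iff_ne_empty] using hz2)
  · intro hx
    exact ⟨x, R.refl x, by simpa [upperApprox, ← Set.nonempty_iff_ne_empty] using hx⟩

lemma lower_of_sat {U : Type*} (R : Setoid U) (X S : Set U)
    (hS : S = upperApprox R X ∨ S = (upperApprox R X)ᶜ) :
    lowerApprox R S = S := by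
  ext x
  simp only [lowerApprox, Set.mem_setOf_eq]
  constructor
  · intro h; exact h (R.refl x)
  · intro hx y hy
    rcases hS with rfl | rfl
    · exact upper_saturated R X hy hx
    · intro hmem
      exact hx (upper_saturated R X (R.symm hy) hmem)

theorem rough_stone {U : Type*} [Fintype U] [Nonempty U] (R : Setoid U) (X : Set U) :
    (upperApprox R (upperApprox R X)ᶜ)ᶜ = upperApprox R X ∧
    lowerApprox R (upperApprox R X)ᶜ ∪
      lowerApprox R (upperApprox R (upperApprox R X)ᶜ)ᶜ = Set.univ ∧
    upperApprox R (upperApprox R X)ᶜ ∪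
      upperApprox R (upperApprox R (upperApprox R X)ᶜ)ᶜ = Set.univ := by
  have h1 := upper_compl_upper R X
  refine ⟨by rw [h1, compl_compl], ?_, ?_⟩
  · rw [h1, compl_compl, lower_of_sat R X _ (Or.inr rfl), lower_of_sat R X _ (Or.inl rfl)]
    exact Set.compl_union_self _
  · rw [h1, compl_compl, upper_upper]
    exact Set.compl_union_self _
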